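/- arXiv:1407.7932 — 2 statements merged into one kernel-verified Lean document; each statement's English description precedes it below -/
import Mathlib

section
/- Let G = (N, E) be a finite directed graph in which every node has at least one successor. The CTL formula AU(φ₁, φ₂) holds at v (every infinite path from v has an index i with φ₂ at λ_i and φ₁ at all λ_j, j < i) if and only if: (1) there is no path of length |N| + 1 from v along which φ₁ ∧ ¬φ₂ holds at every node, and (2) every path from v of length |N| contains an index i with φ₂ at λ_i and φ₁ at all earlier nodes. -/
/-- AU(φ₁, φ₂) at `v`: every infinite path from `v` has an index `i` with `φ₂`
    at `λ i` and `φ₁` at all `λ j`, `j < i`. -/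
def AUat {V : Type*} (E : V → V → Prop) (φ₁ φ₂ : V → Prop) (v : V) : Prop :=
  ∀ lam : ℕ → V, lam 0 = v → (∀ i, E (lam i) (lam (i + 1))) →
    ∃ i, φ₂ (lam i) ∧ ∀ j < i, φ₁ (lam j)

/-- If a finite path has a repeated node with `¬φ₂` everywhere on it, then AU fails
    at its start. -/
lemma loop_no_AU {V : Type*} (E : V → V → Prop) (φ₁ φ₂ : V → Prop)
    (lam : ℕ → V) (a b : ℕ) (hab : a < b) (heq : lam a = lam b)
    (hE : ∀ i < b, E (lam i) (lam (i + 1)))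
    (hφ : ∀ j < b, ¬ φ₂ (lam j)) : ¬ AUat E φ₁ φ₂ (lam 0) := by
  intro hAU
  set m := b - a with hm
  set f : ℕ → ℕ := fun n => if n < b then n else a + (n - a) % m with hf
  have hflt : ∀ n, f n < b := by
    intro n
    by_cases h : n < b
    · simpa [hf, h]
    · have h1 : (n - a) % m < m := Nat.mod_lt _ (by omega)
      simp only [hf, if_neg h]
      omega
  have hf0 : f 0 = 0 := by simp [hf]; omega
  have hedge : ∀ n, E (lam (f n)) (lam (f (n + 1))) := by
    intro n
    by_cases h1 : n + 1 < b
    · have hn : f n = n := if_pos (by omega)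
      have hn1 : f (n + 1) = n + 1 := if_pos h1
      rw [hn, hn1]; exact hE n (by omega)
    · by_cases h2 : n + 1 = b
      · have hn : f n = n := if_pos (by omega)
        have hn1 : f (n + 1) = a := by
          simp only [hf, if_neg (by omega : ¬ n + 1 < b)]
          have hna : n + 1 - a = m := by omega
          simp [hna, Nat.mod_self]
        rw [hn, hn1, heq]
        have := hE n (by omega)
        rwa [h2] at this
      · have hb : b ≤ n := by omega
        have hn : f n = a + (n - a) % m := if_neg (by omega)
        set r := (n - a) % m with hr
        have hrm : r < m := Nat.mod_lt _ (by omega)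
        have hmod : (n + 1 - a) % m = (r + 1) % m := by
          have hna : r + m * ((n - a) / m) = n - a := Nat.mod_add_div _ _
          have hstep : n + 1 - a = (r + 1) + m * ((n - a) / m) := by omega
          rw [hstep, Nat.add_mul_mod_self_left]
        have hn1 : f (n + 1) = a + (r + 1) % m := by
          simp only [hf, if_neg (by omega : ¬ n + 1 < b)]
          rw [hmod]
        by_cases hc : r + 1 = m
        · have hfa : f (n + 1) = a := by rw [hn1, hc, Nat.mod_self]; omega
          rw [hfa, heq, hn]
          have har : a + r = b - 1 := by omega
          rw [har]
          have := hE (b - 1) (by omega)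
          rwa [show b - 1 + 1 = b by omega] at this
        · have hfs : f (n + 1) = f n + 1 := by
            rw [hn1, hn, Nat.mod_eq_of_lt (by omega)]; omega
          rw [hfs]
          exact hE (f n) (by rw [hn]; omega)
  obtain ⟨i, hi2, -⟩ := hAU (fun n => lam (f n)) (by simp [hf0]) hedge
  exact hφ (f i) (hflt i) hi2

/-- Pigeonhole: any path of length at least `|V|` repeats a node. -/
lemma repeat_lemma {V : Type*} [Fintype V] (lam : ℕ → V) (m : ℕ)
    (hm : Fintype.card V ≤ m) : ∃ a b, a < b ∧ b ≤ m ∧ lam a = lam b := by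
  have hlt : Fintype.card V < Fintype.card (Fin (m + 1)) := by
    simp; omega
  obtain ⟨x, y, hxy, heq⟩ :=
    Fintype.exists_ne_map_eq_of_card_lt (fun i : Fin (m + 1) => lam i) hlt
  rcases lt_trichotomy (x : ℕ) (y : ℕ) with h | h | h
  · exact ⟨x, y, h, by have := y.isLt; omega, heq⟩
  · exact absurd (Fin.ext h) hxy
  · exact ⟨y, x, h, by have := x.isLt; omega, heq.symm⟩

/-- in a finite graph where every node has a successor,
    AU(φ₁,φ₂) at `v` iff (1) no path of length `|N| + 1` from `v` has `φ₁ ∧ ¬φ₂`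
    at every node, and (2) every path from `v` of length `|N|` contains an index
    with `φ₂` there and `φ₁` at all earlier nodes. -/
theorem AU_characterization {V : Type*} [Fintype V] (E : V → V → Prop)
    (hsucc : ∀ v, ∃ v', E v v') (φ₁ φ₂ : V → Prop) (v : V) :
    AUat E φ₁ φ₂ v ↔
      (¬ ∃ lam : ℕ → V, lam 0 = v ∧ (∀ i < Fintype.card V + 1, E (lam i) (lam (i + 1))) ∧
          ∀ i ≤ Fintype.card V + 1, φ₁ (lam i) ∧ ¬ φ₂ (lam i)) ∧
      (∀ lam : ℕ → V, lam 0 = v → (∀ i < Fintype.card V, E (lam i) (lam (i + 1))) →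
          ∃ i ≤ Fintype.card V, φ₂ (lam i) ∧ ∀ j < i, φ₁ (lam j)) := by
  classical
  set c := Fintype.card V with hc
  constructor
  · intro hAU
    constructor
    · rintro ⟨lam, h0, hE, hφ⟩
      obtain ⟨a, b, hab, hbm, heq⟩ := repeat_lemma lam (c + 1) (by omega)
      exact loop_no_AU E φ₁ φ₂ lam a b hab heq (fun i hi => hE i (by omega))
        (fun j hj => (hφ j (by omega)).2) (by rw [h0]; exact hAU)
    · intro lam h0 hE
      choose s hs using hsucc
      set mu : ℕ → V := fun n => if n ≤ c then lam n else s^[n - c] (lam c) with hmu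
      have hmuE : ∀ n, E (mu n) (mu (n + 1)) := by
        intro n
        by_cases h1 : n + 1 ≤ c
        · have ha : mu n = lam n := if_pos (by omega)
          have hb : mu (n + 1) = lam (n + 1) := if_pos h1
          rw [ha, hb]; exact hE n (by omega)
        · by_cases h2 : n ≤ c
          · have hnc : n = c := by omega
            have ha : mu n = lam c := by rw [hnc]; exact if_pos le_rfl
            have hb : mu (n + 1) = s (lam c) := by
              simp only [hmu, if_neg (by omega : ¬ n + 1 ≤ c), hnc]
              simp
            rw [ha, hb]; exact hs _
          · have ha : mu n = s^[n - c] (lam c) := if_neg h2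
            have hb : mu (n + 1) = s (s^[n - c] (lam c)) := by
              simp only [hmu, if_neg (by omega : ¬ n + 1 ≤ c)]
              rw [show n + 1 - c = (n - c) + 1 by omega, Function.iterate_succ_apply']
            rw [ha, hb]; exact hs _
      have hmu0 : mu 0 = v := by
        simp only [hmu, if_pos (Nat.zero_le c)]
        exact h0
      obtain ⟨i, hi2, hi1⟩ := hAU mu hmu0 hmuE
      have hex : ∃ i, φ₂ (mu i) := ⟨i, hi2⟩
      set i' := Nat.find hex with hi'
      have hmin : ∀ j < i', ¬ φ₂ (mu j) := fun j hj => Nat.find_min hex hj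
      have hfi : φ₂ (mu i') := Nat.find_spec hex
      have hle : i' ≤ i := Nat.find_le hi2
      have hφ1 : ∀ j < i', φ₁ (mu j) := fun j hj => hi1 j (lt_of_lt_of_le hj hle)
      by_cases hcase : i' ≤ c
      · refine ⟨i', hcase, ?_, ?_⟩
        · rwa [show mu i' = lam i' from if_pos hcase] at hfi
        · intro j hj
          have := hφ1 j hj
          rwa [show mu j = lam j from if_pos (by omega)] at this
      · exfalso
        obtain ⟨a, b, hab, hbm, heq⟩ := repeat_lemma mu c le_rfl
        exact loop_no_AU E φ₁ φ₂ mu a b hab heq (fun k _ => hmuE k)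
          (fun j hj => hmin j (by omega)) (by rw [hmu0]; exact hAU)
  · rintro ⟨-, h2⟩ lam h0 hE
    obtain ⟨i, -, hi⟩ := h2 lam h0 (fun k _ => hE k)
    exact ⟨i, hi⟩
end

section
/- In a finite directed graph where every backward path from any node eventually reaches the start node s (i.e., the reversed graph restricted to nodes reachable from s is such that all reverse paths terminate at s), the past-time formula EB(φ₁, φ₂) holds at v if and only if PathsBack applied to the predecessor relation with bound |N| holds at v: there is a backward path of length at most |N| from v witnessing φ₂ at its end and φ₁ at all earlier positions. -/
/-- PathsBack over an arbitrary step relation `R` (here used with the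
    predecessor relation): F is the final requirement, I the invariant. -/
def PathsBack {V : Type*} (R : V → V → Prop) (I F : V → Prop) : ℕ → V → Prop
  | 0, v => F v
  | n + 1, v => PathsBack R I F n v ∨ (I v ∧ ∃ v', R v v' ∧ PathsBack R I F n v')

/-- EB(φ₁, φ₂) at `v`: there is a backward path `λ` from `v` (following edges in
    reverse) and an index `i` with `φ₂ (λ i)` and `φ₁ (λ j)` for all `j < i`. -/
def EBat {V : Type*} (E : V → V → Prop) (φ₁ φ₂ : V → Prop) (v : V) : Prop :=
  ∃ (lam : ℕ → V) (i : ℕ), lam 0 = v ∧ (∀ j < i, E (lam (j + 1)) (lam j)) ∧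
    φ₂ (lam i) ∧ ∀ j < i, φ₁ (lam j)

lemma pathsBack_iff_path {V : Type*} (R : V → V → Prop) (I F : V → Prop) :
    ∀ (n : ℕ) (v : V), PathsBack R I F n v ↔
      ∃ i ≤ n, ∃ lam : ℕ → V, lam 0 = v ∧ (∀ j < i, R (lam j) (lam (j + 1))) ∧
        F (lam i) ∧ ∀ j < i, I (lam j) := by
  intro n
  induction n with
  | zero =>
    intro v
    constructor
    · intro h
      exact ⟨0, le_refl 0, fun _ => v, rfl, by omega, h, by omega⟩
    · rintro ⟨i, hi, lam, h0, _, hF, _⟩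
      have : i = 0 := Nat.le_zero.mp hi
      subst this
      rwa [h0] at hF
  | succ n ih =>
    intro v
    constructor
    · rintro (h | ⟨hI, v', hR, h⟩)
      · obtain ⟨i, hi, lam, h0, hE, hF, hφ⟩ := (ih v).mp h
        exact ⟨i, le_trans hi (Nat.le_succ n), lam, h0, hE, hF, hφ⟩
      · obtain ⟨i, hi, lam, h0, hE, hF, hφ⟩ := (ih v').mp h
        refine ⟨i + 1, by omega, fun k => if k = 0 then v else lam (k - 1), by simp, ?_, ?_, ?_⟩
        · intro j hj
          rcases Nat.eq_zero_or_pos j with rfl | hpos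
          · simpa [h0] using hR
          · have h1 : ¬ j = 0 := by omega
            have h2 : ¬ j + 1 = 0 := by omega
            simp only [h1, h2, if_false]
            have : j + 1 - 1 = (j - 1) + 1 := by omega
            rw [this]
            exact hE (j - 1) (by omega)
        · simp only [Nat.succ_ne_zero, if_false]
          simpa using hF
        · intro j hj
          rcases Nat.eq_zero_or_pos j with rfl | hpos
          · simpa using hI
          · have h1 : ¬ j = 0 := by omega
            simp only [h1, if_false]
            exact hφ (j - 1) (by omega)
    · rintro ⟨i, hi, lam, h0, hE, hF, hφ⟩
      rcases Nat.lt_or_ge i (n + 1) with hlt | hge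
      · exact Or.inl ((ih v).mpr ⟨i, by omega, lam, h0, hE, hF, hφ⟩)
      · have hieq : i = n + 1 := by omega
        subst hieq
        refine Or.inr ⟨by simpa [h0] using hφ 0 (by omega), lam 1,
          by simpa [h0] using hE 0 (by omega), (ih (lam 1)).mpr ?_⟩
        refine ⟨n, le_refl n, fun k => lam (k + 1), rfl, ?_, hF, ?_⟩
        · intro j hj; exact hE (j + 1) (by omega)
        · intro j hj; exact hφ (j + 1) (by omega)

lemma shorten_path {V : Type*} [Fintype V] (E : V → V → Prop) (φ₁ φ₂ : V → Prop) :
    ∀ (i : ℕ) (lam : ℕ → V), (∀ j < i, E (lam (j + 1)) (lam j)) → φ₂ (lam i) →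
      (∀ j < i, φ₁ (lam j)) →
      ∃ i' ≤ Fintype.card V, ∃ lam' : ℕ → V, lam' 0 = lam 0 ∧
        (∀ j < i', E (lam' (j + 1)) (lam' j)) ∧ φ₂ (lam' i') ∧ ∀ j < i', φ₁ (lam' j) := by
  intro i
  induction i using Nat.strong_induction_on with
  | _ i IH =>
    intro lam hE hF hφ
    rcases Nat.lt_or_ge i (Fintype.card V + 1) with hle | hgt
    · exact ⟨i, by omega, lam, rfl, hE, hF, hφ⟩
    · -- pigeonhole: among lam 0, ..., lam i there is a repeat
      have hcard : Fintype.card V < Fintype.card (Fin (i + 1)) := by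
        simp [Fintype.card_fin]; omega
      obtain ⟨x, y, hxy, heq⟩ :=
        Fintype.exists_ne_map_eq_of_card_lt (fun k : Fin (i + 1) => lam k.val) hcard
      -- wlog a < b
      obtain ⟨a, b, hab, habi, heq⟩ : ∃ a b : ℕ, a < b ∧ b ≤ i ∧ lam a = lam b := by
        rcases lt_or_gt_of_ne (fun h : x = y => hxy h) with h | h
        · exact ⟨x.val, y.val, h, by omega, heq⟩
        · exact ⟨y.val, x.val, h, by omega, heq.symm⟩
      set d := b - a with hd
      have hdpos : 0 < d := by omega
      set lam2 : ℕ → V := fun k => if k ≤ a then lam k else lam (k + d) with hlam2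
      have hnew : i - d < i := by omega
      have h20 : lam2 0 = lam 0 := by simp [hlam2]
      rw [← h20]
      refine IH (i - d) hnew lam2 ?_ ?_ ?_
      · intro j hj
        rcases Nat.lt_trichotomy j a with hja | hja
        · have h1 : j ≤ a := by omega
          have h2 : j + 1 ≤ a := by omega
          simp only [hlam2, h1, h2, if_pos]
          exact hE j (by omega)
        · rcases hja with rfl | hja
          · have h1 : j ≤ j := le_refl j
            have h2 : ¬ j + 1 ≤ j := by omega
            simp only [hlam2, if_pos h1, h2, if_false]
            have : j + 1 + d = b + 1 := by omega
            rw [this, heq]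
            exact hE b (by omega)
          · have h1 : ¬ j ≤ a := by omega
            have h2 : ¬ j + 1 ≤ a := by omega
            simp only [hlam2, h1, h2, if_false]
            have : j + 1 + d = (j + d) + 1 := by omega
            rw [this]
            exact hE (j + d) (by omega)
      · rcases Nat.lt_or_ge a (i - d) with h | h
        · have h1 : ¬ i - d ≤ a := by omega
          simp only [hlam2, h1, if_false]
          have : i - d + d = i := by omega
          rwa [this]
        · -- i - d ≥ a always; so i - d = a, meaning i = b
          have hia : i - d = a := by omega
          have hib : i = b := by omega
          simp only [hlam2, hia, if_pos (le_refl a)]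
          rw [heq, ← hib]; exact hF
      · intro j hj
        rcases le_or_gt j a with h1 | h1
        · simp only [hlam2, if_pos h1]
          exact hφ j (by omega)
        · have h2 : ¬ j ≤ a := by omega
          simp only [hlam2, h2, if_false]
          exact hφ (j + d) (by omega)

/-- in a finite graph whose start node `s` has no predecessors and
    from which every node is reachable, EB(φ₁,φ₂) holds at `v` iff PathsBack on
    the predecessor relation with bound `|N|` holds at `v`. -/
theorem EB_iff_pathsBack_pred {V : Type*} [Fintype V] (E : V → V → Prop) (s : V)
    (hstart : ∀ u, ¬ E u s) (hreach : ∀ v, Relation.ReflTransGen E s v)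
    (φ₁ φ₂ : V → Prop) (v : V) :
    EBat E φ₁ φ₂ v ↔ PathsBack (fun a b => E b a) φ₁ φ₂ (Fintype.card V) v := by
  constructor
  · rintro ⟨lam, i, h0, hE, hF, hφ⟩
    obtain ⟨i', hi', lam', h0', hE', hF', hφ'⟩ := shorten_path E φ₁ φ₂ i lam hE hF hφ
    exact (pathsBack_iff_path (fun a b => E b a) φ₁ φ₂ (Fintype.card V) v).mpr
      ⟨i', hi', lam', by rw [h0', h0], hE', hF', hφ'⟩
  · intro h
    obtain ⟨i, _, lam, h0, hE, hF, hφ⟩ :=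
      (pathsBack_iff_path (fun a b => E b a) φ₁ φ₂ (Fintype.card V) v).mp h
    exact ⟨lam, i, h0, hE, hF, hφ⟩
end
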